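/- Let N, K ∈ ℕ, let A ∈ ℝ^{2N×2K} satisfy Aᵀ J_{2N} A = J_{2K} with symplectic inverse A⁺ = J_{2K}ᵀ Aᵀ J_{2N}, and let H : ℝ^{2N} → ℝ be differentiable. Let y : [0,T] → ℝ^{2N} be differentiable with y'(t) = J_{2N} ∇H(y(t)) for all t, and suppose the trajectory stays on the reduced subspace: y(t) = A A⁺ y(t) for all t ∈ [0,T]. Then the reduced trajectory ȳ(t) = A⁺ y(t) solves the reduced canonical Hamiltonian system ȳ'(t) = J_{2K} ∇(H ∘ A)(ȳ(t)) for all t ∈ [0,T]. -/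

import Mathlib

/-!
Differentiating `ȳ = A⁺ y` gives `ȳ' = A⁺ J_{2N} ∇H(y)`. Since `J² = -1` and `Jᵀ = -J`, one has
`A⁺ J_{2N} = J_{2K} Aᵀ`, while the chain rule gives `∇(H ∘ A)(ȳ) = Aᵀ ∇H(A ȳ) = Aᵀ ∇H(y)`
because `A A⁺ y = y` on the trajectory.
-/

open Matrix

noncomputable section

/-- The canonical symplectic matrix `J_{2n} = [[0, I], [-I, 0]]`. -/
def symplJ (n : ℕ) : Matrix (Fin n ⊕ Fin n) (Fin n ⊕ Fin n) ℝ :=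
  Matrix.fromBlocks 0 1 (-1) 0

/-- The symplectic inverse `A⁺ = J_{2K}ᵀ Aᵀ J_{2N}` of a rectangular matrix
`A ∈ ℝ^{2N×2K}`. -/
def symplInv {N K : ℕ} (A : Matrix (Fin N ⊕ Fin N) (Fin K ⊕ Fin K) ℝ) :
    Matrix (Fin K ⊕ Fin K) (Fin N ⊕ Fin N) ℝ :=
  (symplJ K)ᵀ * Aᵀ * symplJ N

section GradientComp

open InnerProductSpace

variable {𝕜 E F : Type*} [RCLike 𝕜]
  [NormedAddCommGroup E] [InnerProductSpace 𝕜 E] [CompleteSpace E]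
  [NormedAddCommGroup F] [InnerProductSpace 𝕜 F] [CompleteSpace F]

theorem HasGradientAt.comp_continuousLinearMap {f : F → 𝕜} {f' : F} (L : E →L[𝕜] F) {x : E}
    (hf : HasGradientAt f f' (L x)) : HasGradientAt (f ∘ L) (L.adjoint f') x := by
  rw [hasGradientAt_iff_hasFDerivAt] at hf ⊢
  have hdual : toDual 𝕜 E (L.adjoint f') = (toDual 𝕜 F f').comp L := by
    ext v
    simp [ContinuousLinearMap.adjoint_inner_left]
  rw [hdual]
  exact hf.comp x L.hasFDerivAt

theorem gradient_comp_continuousLinearMap {f : F → 𝕜} (L : E →L[𝕜] F) {x : E}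
    (hf : DifferentiableAt 𝕜 f (L x)) :
    gradient (f ∘ L) x = L.adjoint (gradient f (L x)) :=
  (hf.hasGradientAt.comp_continuousLinearMap L).gradient

end GradientComp

theorem gradient_comp_toEuclideanLin {m n : Type*} [Fintype m] [Fintype n] [DecidableEq m]
    [DecidableEq n]
    (M : Matrix m n ℝ) {f : EuclideanSpace ℝ m → ℝ} {z : EuclideanSpace ℝ n}
    (hf : DifferentiableAt ℝ f (toEuclideanLin M z)) :
    gradient (fun w => f (toEuclideanLin M w)) z
      = toEuclideanLin Mᵀ (gradient f (toEuclideanLin M z)) := by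
  rw [← conjTranspose_eq_transpose_of_trivial, toEuclideanLin_conjTranspose_eq_adjoint,
    LinearMap.adjoint_eq_toCLM_adjoint]
  exact gradient_comp_continuousLinearMap (toEuclideanLin M).toContinuousLinearMap hf

theorem symplJ_transpose (n : ℕ) : (symplJ n)ᵀ = -symplJ n := by
  simp [symplJ, fromBlocks_transpose, fromBlocks_neg]

theorem symplJ_mul_self (n : ℕ) : symplJ n * symplJ n = -1 := by
  simp [symplJ, fromBlocks_multiply, ← fromBlocks_one, fromBlocks_neg]

theorem symplInv_mul_symplJ {N K : ℕ} (A : Matrix (Fin N ⊕ Fin N) (Fin K ⊕ Fin K) ℝ) :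
    symplInv A * symplJ N = symplJ K * Aᵀ := by
  rw [symplInv, Matrix.mul_assoc, symplJ_mul_self, symplJ_transpose]
  simp

theorem reduced_trajectory_hamiltonian_general
    (N K : ℕ) (T : ℝ)
    (A : Matrix (Fin N ⊕ Fin N) (Fin K ⊕ Fin K) ℝ)
    (H : EuclideanSpace ℝ (Fin N ⊕ Fin N) → ℝ)
    (hH : Differentiable ℝ H)
    (y : ℝ → EuclideanSpace ℝ (Fin N ⊕ Fin N))
    (hy : ∀ t ∈ Set.Icc (0 : ℝ) T,
      HasDerivAt y (Matrix.toEuclideanLin (symplJ N) (gradient H (y t))) t)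
    (hrange : ∀ t ∈ Set.Icc (0 : ℝ) T,
      Matrix.toEuclideanLin A (Matrix.toEuclideanLin (symplInv A) (y t)) = y t) :
    ∀ t ∈ Set.Icc (0 : ℝ) T,
      HasDerivAt (fun s => Matrix.toEuclideanLin (symplInv A) (y s))
        (Matrix.toEuclideanLin (symplJ K)
          (gradient (fun z => H (Matrix.toEuclideanLin A z))
            (Matrix.toEuclideanLin (symplInv A) (y t)))) t := by
  intro t ht
  have hvelocity : toEuclideanLin (symplJ K)
      (gradient (fun z => H (toEuclideanLin A z)) (toEuclideanLin (symplInv A) (y t)))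
      = toEuclideanLin (symplInv A) (toEuclideanLin (symplJ N) (gradient H (y t))) := by
    rw [gradient_comp_toEuclideanLin A hH.differentiableAt, hrange t ht, ← LinearMap.comp_apply,
      ← LinearMap.comp_apply, ← toLpLin_mul_same, ← toLpLin_mul_same, symplInv_mul_symplJ]
  rw [hvelocity]
  exact (toEuclideanLin (symplInv A)).toContinuousLinearMap.hasFDerivAt.comp_hasDerivAt t (hy t ht)

/-- If a Hamiltonian trajectory `y' = J_{2N} ∇H(y)` stays on the reduced subspace,
`y(t) = A A⁺ y(t)`, then the reduced trajectory `ȳ = A⁺ y` solves the reduced canonical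
Hamiltonian system `ȳ' = J_{2K} ∇(H∘A)(ȳ)`. -/
theorem reduced_trajectory_hamiltonian
    (N K : ℕ) (T : ℝ)
    (A : Matrix (Fin N ⊕ Fin N) (Fin K ⊕ Fin K) ℝ)
    (hA : Aᵀ * symplJ N * A = symplJ K)
    (H : EuclideanSpace ℝ (Fin N ⊕ Fin N) → ℝ)
    (hH : Differentiable ℝ H)
    (y : ℝ → EuclideanSpace ℝ (Fin N ⊕ Fin N))
    (hy : ∀ t ∈ Set.Icc (0 : ℝ) T,
      HasDerivAt y (Matrix.toEuclideanLin (symplJ N) (gradient H (y t))) t)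
    (hrange : ∀ t ∈ Set.Icc (0 : ℝ) T,
      Matrix.toEuclideanLin A (Matrix.toEuclideanLin (symplInv A) (y t)) = y t) :
    ∀ t ∈ Set.Icc (0 : ℝ) T,
      HasDerivAt (fun s => Matrix.toEuclideanLin (symplInv A) (y s))
        (Matrix.toEuclideanLin (symplJ K)
          (gradient (fun z => H (Matrix.toEuclideanLin A z))
            (Matrix.toEuclideanLin (symplInv A) (y t)))) t :=
  reduced_trajectory_hamiltonian_general N K T A H hH y hy hrange
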